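/- In the LLG domain with locals winning, both locals weak, and counting the auctioneer as a fourth player, the Shapley payment with auctioneer of bidder 1 is p₁ = (7A)/12 − B/4 + G/4. -/

import Mathlib

/-- Shapley payoff (with auctioneer) of bidder `i` in a 3-bidder coalitional game:
the auctioneer is counted as a fourth player implicitly present in every coalition. -/
noncomputable def shapleyAuc (V : Finset (Fin 3) → ℝ) (i : Fin 3) : ℝ :=
  ∑ S ∈ (Finset.univ.erase i).powerset,
    (((S.card + 1).factorial * (3 - S.card - 1).factorial : ℕ) : ℝ)
      / ((Nat.factorial 4 : ℕ) : ℝ) * (V (insert i S) - V S)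

/-- With the auctioneer as fourth player the weights are `1!2!/4! = 2!1!/4! = 1/12` for coalitions
of size `0` and `1`, and `3!0!/4! = 1/4` for the coalition of both other bidders. -/
theorem shapleyAuc_zero (V : Finset (Fin 3) → ℝ) :
    shapleyAuc V 0 =
      (V {0} - V ∅) / 12 + (V {0, 1} - V {1}) / 12 + (V {0, 2} - V {2}) / 12
        + (V {0, 1, 2} - V {1, 2}) / 4 := by
  have hpowerset : ((Finset.univ : Finset (Fin 3)).erase 0).powerset = {∅, {1}, {2}, {1, 2}} := by
    decide
  rw [shapleyAuc, hpowerset, Finset.sum_insert (by decide), Finset.sum_insert (by decide),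
    Finset.sum_insert (by decide), Finset.sum_singleton]
  have hcard : ({1, 2} : Finset (Fin 3)).card = 2 := rfl
  simp only [Finset.card_empty, Finset.card_singleton, hcard, Nat.factorial]
  norm_num
  ring

theorem stmt4_general (A B G : ℝ)
    (V : Finset (Fin 3) → ℝ)
    (h0 : V ∅ = 0) (h1 : V {0} = A) (h2 : V {1} = B) (h3 : V {2} = G)
    (h12 : V {0, 1} = A + B) (h13 : V {0, 2} = G) (h23 : V {1, 2} = G)
    (h123 : V {0, 1, 2} = A + B) :
    A - shapleyAuc V 0 = 7 * A / 12 - B / 4 + G / 4 := by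
  rw [shapleyAuc_zero, h0, h1, h2, h3, h12, h13, h23, h123]
  ring

/-- In LLG with locals winning and both locals weak, the Shapley payment
with auctioneer of bidder 1 is p₁ = A − π₁ = 7A/12 − B/4 + G/4. -/
theorem stmt4 (A B G : ℝ) (hA : 0 ≤ A) (hB : 0 ≤ B) (hG : 0 ≤ G)
    (hAG : A < G) (hBG : B < G) (hwin : A + B ≥ G)
    (V : Finset (Fin 3) → ℝ)
    (h0 : V ∅ = 0) (h1 : V {0} = A) (h2 : V {1} = B) (h3 : V {2} = G)
    (h12 : V {0, 1} = A + B) (h13 : V {0, 2} = G) (h23 : V {1, 2} = G)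
    (h123 : V {0, 1, 2} = A + B) :
    A - shapleyAuc V 0 = 7 * A / 12 - B / 4 + G / 4 :=
  stmt4_general A B G V h0 h1 h2 h3 h12 h13 h23 h123
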